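/- Let Λ = k⟨X₁,…,Xₙ⟩/(Xᵤ^a, XᵢXⱼ − qXⱼXᵢ for i<j) with q a primitive a-th root of unity, and let σ = α₁x₁ + ⋯ + αₙxₙ for scalars αᵢ. Then for each generator xᵢ one has Σ_{j=0}^{a−1} σ^j xᵢ σ^{a−1−j} = 0. -/

import Mathlib

/-!
If `y * z = q • (z * y)`, then `(y + z)^m` expands with Gaussian binomial coefficients. When
`q` is a primitive `a`-th root of unity, these coefficients vanish for `0 < j < a`, because
`[a]_q = 0` but `[j]_q ≠ 0` for `0 < j < a`. So `(∑ yᵤ)^a = ∑ yᵤ^a` for pairwise `q`-commuting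
`yᵤ`. Over the dual numbers `Λ[ε]` the elements `(αᵤ + δᵤᵢ ε) xᵤ` are pairwise `q`-commuting with
vanishing `a`-th powers, and they sum to `σ + ε xᵢ`. Hence `(σ + ε xᵢ)^a = 0`, and the `ε`-part
of this power is `∑ⱼ σ^j xᵢ σ^(a-1-j)`.
-/

/-- The defining relations of a quantum complete intersection:
`Xᵤ^{aᵤ} = 0` and `XᵢXⱼ = q_{ij}·XⱼXᵢ` for `i < j`. -/
inductive QCIRel (k : Type*) [Field k] (n : ℕ) (a : Fin n → ℕ) (q : Fin n → Fin n → k) :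
    FreeAlgebra k (Fin n) → FreeAlgebra k (Fin n) → Prop
  | pow (u : Fin n) : QCIRel k n a q (FreeAlgebra.ι k u ^ a u) 0
  | comm (i j : Fin n) (hij : i < j) : QCIRel k n a q
      (FreeAlgebra.ι k i * FreeAlgebra.ι k j)
      (q i j • (FreeAlgebra.ι k j * FreeAlgebra.ι k i))

/-- The quantum complete intersection `k⟨X₁,…,Xₙ⟩/(Xᵤ^{aᵤ}, XᵢXⱼ − q_{ij}XⱼXᵢ)`. -/
abbrev QCI (k : Type*) [Field k] (n : ℕ) (a : Fin n → ℕ) (q : Fin n → Fin n → k) :=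
  RingQuot (QCIRel k n a q)

/-- The image `xᵢ` of the generator `Xᵢ` in the quantum complete intersection. -/
def QCI.x (k : Type*) [Field k] (n : ℕ) (a : Fin n → ℕ) (q : Fin n → Fin n → k) (i : Fin n) :
    QCI k n a q :=
  RingQuot.mkAlgHom k (QCIRel k n a q) (FreeAlgebra.ι k i)

open Finset

section QBinomial

variable {R : Type*}

def qNat [Semiring R] (q : R) (r : ℕ) : R := ∑ j ∈ range r, q ^ j

def qFactorial [Semiring R] (q : R) : ℕ → R
  | 0 => 1
  | r + 1 => qNat q (r + 1) * qFactorial q r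

/-- The Pascal recursion is the one forced by expanding `(y + z)^(m+1) = (y + z) * (y + z)^m`
when `y * z = q • (z * y)`; see `QCommute.add_pow`. -/
def qBinomial [Semiring R] (q : R) : ℕ → ℕ → R
  | _, 0 => 1
  | 0, _ + 1 => 0
  | m + 1, j + 1 => q ^ (j + 1) * qBinomial q m (j + 1) + qBinomial q m j

section Semiring

variable [Semiring R] (q : R)

theorem qFactorial_succ (r : ℕ) : qFactorial q (r + 1) = qNat q (r + 1) * qFactorial q r := rfl

theorem qNat_add (u v : ℕ) : qNat q (u + v) = qNat q u + q ^ u * qNat q v := by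
  simp only [qNat, sum_range_add, mul_sum, pow_add]

@[simp] theorem qBinomial_zero_right (m : ℕ) : qBinomial q m 0 = 1 := by
  cases m <;> rfl

theorem qBinomial_succ_succ (m j : ℕ) :
    qBinomial q (m + 1) (j + 1) = q ^ (j + 1) * qBinomial q m (j + 1) + qBinomial q m j := rfl

theorem qBinomial_eq_zero_of_lt : ∀ {m j : ℕ}, m < j → qBinomial q m j = 0
  | 0, _ + 1, _ => rfl
  | m + 1, j + 1, h => by
    rw [qBinomial_succ_succ, qBinomial_eq_zero_of_lt (by omega),
      qBinomial_eq_zero_of_lt (by omega), mul_zero, add_zero]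

@[simp] theorem qBinomial_self (m : ℕ) : qBinomial q m m = 1 := by
  induction m with
  | zero => rfl
  | succ m ih =>
    rw [qBinomial_succ_succ, qBinomial_eq_zero_of_lt q (by omega), ih, mul_zero, zero_add]

end Semiring

theorem qBinomial_mul_qFactorial_mul_qFactorial [CommSemiring R] (q : R) :
    ∀ {m j : ℕ}, j ≤ m → qBinomial q m j * qFactorial q j * qFactorial q (m - j) = qFactorial q m
  | m, 0, _ => by simp [qFactorial]
  | m + 1, j + 1, hj => by
    have hrest : q ^ (j + 1) * qBinomial q m (j + 1) * qFactorial q (j + 1) * qFactorial q (m - j)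
        = q ^ (j + 1) * qNat q (m - j) * qFactorial q m := by
      rcases (Nat.le_of_succ_le_succ hj).lt_or_eq with hjm | rfl
      · obtain ⟨r, hr⟩ : ∃ r, m - j = r + 1 := ⟨m - j - 1, by omega⟩
        rw [hr, qFactorial_succ q r,
          ← qBinomial_mul_qFactorial_mul_qFactorial q (show j + 1 ≤ m by omega),
          show m - (j + 1) = r by omega]
        ring
      · simp [qBinomial_eq_zero_of_lt q (Nat.lt_succ_self j), qNat]
    have hsplit : qNat q (m + 1) = qNat q (j + 1) + q ^ (j + 1) * qNat q (m - j) := by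
      rw [← qNat_add, show j + 1 + (m - j) = m + 1 by omega]
    calc qBinomial q (m + 1) (j + 1) * qFactorial q (j + 1) * qFactorial q (m + 1 - (j + 1))
        = q ^ (j + 1) * qBinomial q m (j + 1) * qFactorial q (j + 1) * qFactorial q (m - j)
          + qNat q (j + 1) * (qBinomial q m j * qFactorial q j * qFactorial q (m - j)) := by
          rw [Nat.add_sub_add_right, qBinomial_succ_succ, qFactorial_succ q j]; ring
      _ = q ^ (j + 1) * qNat q (m - j) * qFactorial q m + qNat q (j + 1) * qFactorial q m := by
          rw [hrest, qBinomial_mul_qFactorial_mul_qFactorial q (show j ≤ m by omega)]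
      _ = qFactorial q (m + 1) := by rw [qFactorial_succ q m, hsplit]; ring

end QBinomial

namespace IsPrimitiveRoot

variable {R : Type*} {q : R} {a : ℕ}

theorem qNat_ne_zero [CommRing R] (hq : IsPrimitiveRoot q a) {r : ℕ} (h0 : r ≠ 0) (hr : r < a) :
    qNat q r ≠ 0 := by
  intro h
  have hgeom := geom_sum_mul q r
  rw [← qNat, h, zero_mul, eq_comm, sub_eq_zero] at hgeom
  exact hq.pow_ne_one_of_pos_of_lt h0 hr hgeom

variable [CommRing R] [IsDomain R]

theorem qFactorial_ne_zero (hq : IsPrimitiveRoot q a) : ∀ {r : ℕ}, r < a → qFactorial q r ≠ 0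
  | 0, _ => one_ne_zero
  | r + 1, hr => mul_ne_zero (hq.qNat_ne_zero r.succ_ne_zero hr) (hq.qFactorial_ne_zero (by omega))

theorem qBinomial_eq_zero (hq : IsPrimitiveRoot q a) {j : ℕ} (h0 : j ≠ 0) (hj : j < a) :
    qBinomial q a j = 0 := by
  obtain ⟨m, rfl⟩ : ∃ m, a = m + 1 := ⟨a - 1, by omega⟩
  have hfact : qFactorial q (m + 1) = 0 := by
    rw [qFactorial_succ, qNat, hq.geom_sum_eq_zero (by omega), zero_mul]
  have hid := qBinomial_mul_qFactorial_mul_qFactorial q hj.le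
  rw [hfact] at hid
  simpa [hq.qFactorial_ne_zero hj, hq.qFactorial_ne_zero (show m + 1 - j < m + 1 by omega)]
    using hid

end IsPrimitiveRoot

def QCommute {R A : Type*} [CommSemiring R] [Semiring A] [Algebra R A] (q : R) (y z : A) : Prop :=
  y * z = q • (z * y)

namespace QCommute

variable {R A : Type*} [Semiring A] {y z : A}

section CommSemiring

variable [CommSemiring R] [Algebra R A] {q : R}

theorem eq (h : QCommute q y z) : y * z = q • (z * y) := h

theorem mul_pow (h : QCommute q y z) : ∀ j : ℕ, y * z ^ j = q ^ j • (z ^ j * y)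
  | 0 => by simp
  | j + 1 => by
    rw [pow_succ' z j, ← mul_assoc, h.eq, smul_mul_assoc, mul_assoc, h.mul_pow j,
      mul_smul_comm, smul_smul, ← pow_succ' q j, ← mul_assoc, ← pow_succ' z j]

theorem map {B : Type*} [Semiring B] [Algebra R B] (h : QCommute q y z) (f : A →ₐ[R] B) :
    QCommute q (f y) (f z) := by
  rw [QCommute, ← map_mul, ← map_mul, h.eq, map_smul]

theorem mul_mul_of_central (h : QCommute q y z) {c d : A} (hc : ∀ w, Commute c w)
    (hd : ∀ w, Commute d w) : QCommute q (c * y) (d * z) := by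
  rw [QCommute, (hd y).symm.mul_mul_mul_comm, (hc z).symm.mul_mul_mul_comm, h.eq,
    mul_smul_comm, (hc d).eq]

theorem add_pow (h : QCommute q y z) (m : ℕ) :
    (y + z) ^ m = ∑ j ∈ range (m + 1), qBinomial q m j • (z ^ j * y ^ (m - j)) := by
  induction m with
  | zero => simp
  | succ m ih =>
    set T : ℕ → A := fun j => z ^ j * y ^ (m + 1 - j)
    have hmul : ∀ j ∈ range (m + 1), (y + z) * (qBinomial q m j • (z ^ j * y ^ (m - j)))
        = (q ^ j * qBinomial q m j) • T j + qBinomial q m j • T (j + 1) := by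
      intro j hj
      have hj : m - j + 1 = m + 1 - j := by have := mem_range.1 hj; omega
      rw [add_mul, mul_smul_comm, mul_smul_comm, ← mul_assoc, h.mul_pow, smul_mul_assoc,
        smul_smul, mul_assoc, ← pow_succ', hj, ← mul_assoc, ← pow_succ', mul_comm (q ^ j)]
      simp only [T, Nat.add_sub_add_right]
    have hshift : ∑ j ∈ range (m + 1), (q ^ j * qBinomial q m j) • T j
        = ∑ j ∈ range (m + 1), (q ^ (j + 1) * qBinomial q m (j + 1)) • T (j + 1) + T 0 := by
      have hext := sum_range_succ' (fun j => (q ^ j * qBinomial q m j) • T j) (m + 1)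
      rw [sum_range_succ, qBinomial_eq_zero_of_lt q m.lt_succ_self, mul_zero, zero_smul,
        add_zero] at hext
      rw [hext, pow_zero, qBinomial_zero_right, mul_one, one_smul]
    rw [pow_succ', ih, mul_sum, sum_congr rfl hmul, sum_add_distrib, hshift,
      sum_range_succ' _ (m + 1)]
    simp only [qBinomial_succ_succ, add_smul, sum_add_distrib, qBinomial_zero_right, one_smul]
    abel

end CommSemiring

theorem add_pow_of_isPrimitiveRoot [CommRing R] [IsDomain R] [Algebra R A] {q : R} {a : ℕ}
    (hq : IsPrimitiveRoot q a) (ha : a ≠ 0) (h : QCommute q y z) :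
    (y + z) ^ a = y ^ a + z ^ a := by
  have hvanish : ∀ j ∈ range (a + 1), j ∉ ({0, a} : Finset ℕ) →
      qBinomial q a j • (z ^ j * y ^ (a - j)) = 0 := by
    intro j hj hj'
    rw [mem_insert, mem_singleton, not_or] at hj'
    rw [hq.qBinomial_eq_zero hj'.1 (by have := mem_range.1 hj; omega), zero_smul]
  have hsub : ({0, a} : Finset ℕ) ⊆ range (a + 1) := by
    simp [insert_subset_iff]
  rw [h.add_pow, ← sum_subset hsub hvanish, sum_pair ha.symm]
  simp only [qBinomial_zero_right, qBinomial_self, pow_zero, Nat.sub_zero, Nat.sub_self, one_smul,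
    one_mul, mul_one]

end QCommute

theorem sum_pow_of_qCommute {R A ι : Type*} [CommRing R] [IsDomain R] [Semiring A] [Algebra R A]
    [LinearOrder ι] {q : R} {a : ℕ} (hq : IsPrimitiveRoot q a) (ha : a ≠ 0) {f : ι → A}
    (hf : ∀ u v, u < v → QCommute q (f u) (f v)) (s : Finset ι) :
    (∑ u ∈ s, f u) ^ a = ∑ u ∈ s, f u ^ a := by
  classical
  induction s using Finset.induction_on_min with
  | empty => simp [zero_pow ha]
  | insert b s hb ih =>
    have hbs : b ∉ s := fun hmem => lt_irrefl b (hb b hmem)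
    have hcomm : QCommute q (f b) (∑ u ∈ s, f u) := by
      rw [QCommute, mul_sum, sum_congr rfl fun u hu => (hf b u (hb u hu)).eq, ← smul_sum, sum_mul]
    rw [sum_insert hbs, sum_insert hbs, ← ih, hcomm.add_pow_of_isPrimitiveRoot hq ha]

theorem DualNumber.snd_pow_eq_sum_range {A : Type*} [Semiring A] (x : DualNumber A) (m : ℕ) :
    (x ^ m).snd = ∑ j ∈ range m, x.fst ^ j * x.snd * x.fst ^ (m - 1 - j) := by
  rw [TrivSqZeroExt.snd_pow_eq_sum, ← Multiset.sum_coe, ← Multiset.map_coe, ← Multiset.range,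
    ← range_val, ← Finset.sum, ← sum_range_reflect]
  refine sum_congr rfl fun j hj => ?_
  rw [mem_range] at hj
  simp [Nat.sub_sub_self (show j ≤ m - 1 by omega)]

open DualNumber TrivSqZeroExt in
theorem sum_pow_mul_mul_pow_eq_zero_of_qCommute {R A ι : Type*} [CommRing R] [IsDomain R]
    [Ring A] [Algebra R A] [Fintype ι] [LinearOrder ι] {q : R} {a : ℕ} (hq : IsPrimitiveRoot q a)
    {y : ι → A} (hy : ∀ u v, u < v → QCommute q (y u) (y v)) (hpow : ∀ u, y u ^ a = 0)
    (α : ι → R) (i : ι) :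
    ∑ j ∈ range a, (∑ u, α u • y u) ^ j * y i * (∑ u, α u • y u) ^ (a - 1 - j) = 0 := by
  rcases Nat.eq_zero_or_pos a with rfl | ha
  · simp
  classical
  let c : ι → A[ε] := fun u => algebraMap R A[ε] (α u) + if u = i then ε else 0
  have hc : ∀ u w, Commute (c u) w := fun u w =>
    (Algebra.commute_algebraMap_left (α u) w).add_left
      (by split_ifs; exacts [commute_eps_left w, .zero_left w])
  have hsum : ∑ u, c u * inl (y u) = inl (∑ u, α u • y u) + inr (y i) := by
    simp only [c, add_mul, ite_mul, zero_mul, ← Algebra.smul_def, sum_add_distrib, sum_ite_eq',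
      mem_univ, if_true]
    ext <;> simp [fst_sum, snd_sum]
  have hzero : (inl (∑ u, α u • y u) + inr (y i) : A[ε]) ^ a = 0 := by
    have hqc : ∀ u v, u < v → QCommute q (inl (y u) : A[ε]) (inl (y v)) := fun u v huv =>
      (hy u v huv).map (inlAlgHom R A A)
    rw [← hsum, sum_pow_of_qCommute hq ha.ne' fun u v huv =>
      (hqc u v huv).mul_mul_of_central (hc u) (hc v)]
    simp [(hc _ _).mul_pow, inl_pow, hpow]
  simpa [DualNumber.snd_pow_eq_sum_range] using congrArg snd hzero

theorem QCI.x_pow_eq_zero (k : Type*) [Field k] (n : ℕ) (a : Fin n → ℕ) (q : Fin n → Fin n → k)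
    (u : Fin n) : QCI.x k n a q u ^ a u = 0 := by
  simpa [QCI.x] using RingQuot.mkAlgHom_rel k (QCIRel.pow (a := a) (q := q) u)

theorem QCI.qCommute_x_of_lt (k : Type*) [Field k] (n : ℕ) (a : Fin n → ℕ)
    (q : Fin n → Fin n → k) {u v : Fin n} (h : u < v) :
    QCommute (q u v) (QCI.x k n a q u) (QCI.x k n a q v) := by
  simpa [QCommute, QCI.x] using RingQuot.mkAlgHom_rel k (QCIRel.comm (a := a) (q := q) u v h)

theorem QCI.sum_sigma_pow_x_eq_zero (k : Type*) [Field k] (n a : ℕ) (q : k)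
    (hq : IsPrimitiveRoot q a) (α : Fin n → k) (i : Fin n)
    (σ : QCI k n (fun _ => a) (fun _ _ => q))
    (hσ : σ = ∑ u, α u • QCI.x k n (fun _ => a) (fun _ _ => q) u) :
    ∑ j ∈ Finset.range a,
      σ ^ j * QCI.x k n (fun _ => a) (fun _ _ => q) i * σ ^ (a - 1 - j) = 0 := by
  subst hσ
  exact sum_pow_mul_mul_pow_eq_zero_of_qCommute hq (fun u v => QCI.qCommute_x_of_lt k n _ _)
    (QCI.x_pow_eq_zero k n _ _) α i
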